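/- Let q ∈ (0,1) and ν > -1 with 4(1-q)(1-q^ν) > q^ν. Then the coefficients K_n of the normalized Jackson second q-Bessel function satisfy Σ_{n≥1} (n+1)|K_n| ≤ (8(1-q)(1-q^ν)q^ν - q^{2ν}) / (4(1-q)(1-q^ν) - q^ν)^2; equivalently, ((4(1-q)(1-q^ν) - q^ν)^2 / (8(1-q)(1-q^ν)q^ν - q^{2ν})) · Σ_{n≥1} (n+1)|K_n| ≤ 1. -/

import Mathlib

open Complex

/-- q-Pochhammer symbol (a;q)_n = ∏_{k=1}^n (1 - a q^{k-1}). -/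
noncomputable def qPoch (a q : ℝ) (n : ℕ) : ℝ :=
  ∏ k ∈ Finset.range n, (1 - a * q ^ k)

/-- Coefficients of the normalized Jackson second q-Bessel function. -/
noncomputable def K (q ν : ℝ) (n : ℕ) : ℝ :=
  (-1) ^ n * q ^ ((n : ℝ) * ((n : ℝ) + ν)) /
    (4 ^ n * qPoch q q n * qPoch (q ^ (ν + 1)) q n)

/-- Normalized Jackson second q-Bessel function h_ν^{(2)}(z;q). -/
noncomputable def h2 (q ν : ℝ) (z : ℂ) : ℂ :=
  ∑' n : ℕ, (K q ν n : ℂ) * z ^ (n + 1)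

/-- Derivative of the normalized Jackson second q-Bessel function. -/
noncomputable def h2' (q ν : ℝ) (z : ℂ) : ℂ :=
  ∑' n : ℕ, ((n : ℂ) + 1) * (K q ν n : ℂ) * z ^ n

/-- m-th partial sum of h_ν^{(2)}(z;q). -/
noncomputable def h2p (q ν : ℝ) (m : ℕ) (z : ℂ) : ℂ :=
  z + ∑ n ∈ Finset.Icc 1 m, (K q ν n : ℂ) * z ^ (n + 1)

/-- Derivative of the m-th partial sum of h_ν^{(2)}(z;q). -/
noncomputable def h2p' (q ν : ℝ) (m : ℕ) (z : ℂ) : ℂ :=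
  1 + ∑ n ∈ Finset.Icc 1 m, ((n : ℂ) + 1) * (K q ν n : ℂ) * z ^ n

/-! Bounding every factor of the two q-Pochhammer products below by `1 - q` and `1 - q ^ ν`, and
`q ^ (n (n + ν))` above by `(q ^ ν) ^ n`, gives `|K n| ≤ r ^ n` with
`r = q ^ ν / (4 (1 - q) (1 - q ^ ν)) < 1`. The series is then dominated by
`∑_{n ≥ 1} (n + 1) r ^ n = 1 / (1 - r) ^ 2 - 1`, which is the claimed bound. -/

lemma pow_le_qPoch {a q b : ℝ} (ha : 0 ≤ a) (hq0 : 0 ≤ q) (hq1 : q ≤ 1) (hb : 0 ≤ b)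
    (hba : b ≤ 1 - a) (n : ℕ) : b ^ n ≤ qPoch a q n := by
  calc b ^ n = ∏ _k ∈ Finset.range n, b := by simp
    _ ≤ qPoch a q n := by
      refine Finset.prod_le_prod (fun _ _ => hb) fun k _ => hba.trans ?_
      exact sub_le_sub_left (mul_le_of_le_one_right ha (pow_le_one₀ hq0 hq1)) 1

lemma abs_K_le_pow {q ν : ℝ} (hq0 : 0 < q) (hq1 : q < 1) (hqν : q ^ ν < 1) (n : ℕ) :
    |K q ν n| ≤ (q ^ ν / (4 * (1 - q) * (1 - q ^ ν))) ^ n := by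
  have hqq : (1 - q) ^ n ≤ qPoch q q n :=
    pow_le_qPoch hq0.le hq0.le hq1.le (sub_nonneg.2 hq1.le) le_rfl n
  have hqν_le : (1 - q ^ ν) ^ n ≤ qPoch (q ^ (ν + 1)) q n := by
    refine pow_le_qPoch (by positivity) hq0.le hq1.le (sub_nonneg.2 hqν.le) ?_ n
    exact sub_le_sub_left (Real.rpow_le_rpow_of_exponent_ge hq0 hq1.le (by linarith)) 1
  have hqq_pos : 0 < qPoch q q n := (pow_pos (sub_pos.2 hq1) n).trans_le hqq
  have hqν_pos : 0 < qPoch (q ^ (ν + 1)) q n := (pow_pos (sub_pos.2 hqν) n).trans_le hqν_le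
  have hnum : q ^ ((n : ℝ) * (n + ν)) ≤ (q ^ ν) ^ n := by
    rw [mul_add, Real.rpow_add hq0, mul_comm (n : ℝ) ν, Real.rpow_mul hq0.le ν n,
      Real.rpow_natCast]
    exact mul_le_of_le_one_left (by positivity) (Real.rpow_le_one hq0.le hq1.le (by positivity))
  calc |K q ν n|
    _ = q ^ ((n : ℝ) * (n + ν)) / (4 ^ n * qPoch q q n * qPoch (q ^ (ν + 1)) q n) := by
        rw [K, abs_div, abs_mul, abs_pow, abs_neg, abs_one, one_pow, one_mul,
          abs_of_pos (by positivity), abs_of_pos (by positivity)]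
    _ ≤ (q ^ ν) ^ n / (4 ^ n * (1 - q) ^ n * (1 - q ^ ν) ^ n) := by
        gcongr
    _ = (q ^ ν / (4 * (1 - q) * (1 - q ^ ν))) ^ n := by rw [div_pow, mul_pow, mul_pow]

lemma hasSum_add_two_mul_pow_succ {𝕜 : Type*} [NormedDivisionRing 𝕜] {r : 𝕜}
    (hr : ‖r‖ < 1) :
    HasSum (fun n : ℕ => ((n : 𝕜) + 2) * r ^ (n + 1)) (1 / (1 - r) ^ 2 - 1) := by
  have h := hasSum_choose_mul_geometric_of_norm_lt_one 1 hr
  rw [← hasSum_nat_add_iff' 1] at h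
  simpa [add_assoc, one_add_one_eq_two] using h

lemma one_div_one_sub_div_sq_sub_one {K : Type*} [Field K] {a p : K} (ha : a ≠ 0)
    (hap : a - p ≠ 0) : 1 / (1 - p / a) ^ 2 - 1 = (2 * a * p - p ^ 2) / (a - p) ^ 2 := by
  field_simp
  ring

theorem stmt13_general (q ν : ℝ) (hq : q ∈ Set.Ioo (0 : ℝ) 1)
    (hc : 4 * (1 - q) * (1 - q ^ ν) > q ^ ν) :
    ∑' n : ℕ, ((n : ℝ) + 2) * |K q ν (n + 1)| ≤
      (8 * (1 - q) * (1 - q ^ ν) * q ^ ν - q ^ (2 * ν)) / (4 * (1 - q) * (1 - q ^ ν) - q ^ ν) ^ 2 := by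
  obtain ⟨hq0, hq1⟩ := hq
  have hp : 0 < q ^ ν := Real.rpow_pos_of_pos hq0 ν
  have hA : 0 < 4 * (1 - q) * (1 - q ^ ν) := hp.trans hc
  have hqν : q ^ ν < 1 := by nlinarith
  set r := q ^ ν / (4 * (1 - q) * (1 - q ^ ν))
  have hr1 : ‖r‖ < 1 := by
    rw [Real.norm_of_nonneg (by positivity)]; exact (div_lt_one hA).2 hc
  have hsum := hasSum_add_two_mul_pow_succ hr1
  have hterm (n : ℕ) : ((n : ℝ) + 2) * |K q ν (n + 1)| ≤ ((n : ℝ) + 2) * r ^ (n + 1) :=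
    mul_le_mul_of_nonneg_left (abs_K_le_pow hq0 hq1 hqν _) (by positivity)
  calc ∑' n : ℕ, ((n : ℝ) + 2) * |K q ν (n + 1)|
    _ ≤ ∑' n : ℕ, ((n : ℝ) + 2) * r ^ (n + 1) :=
        Summable.tsum_le_tsum hterm
          (hsum.summable.of_nonneg_of_le (fun _ => by positivity) hterm) hsum.summable
    _ = 1 / (1 - r) ^ 2 - 1 := hsum.tsum_eq
    _ = _ := by
      rw [one_div_one_sub_div_sq_sub_one hA.ne' (by linarith), mul_comm 2 ν, Real.rpow_mul hq0.le,
        Real.rpow_two]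
      ring

theorem stmt13 (q ν : ℝ) (hq : q ∈ Set.Ioo (0 : ℝ) 1) (hν : -1 < ν)
    (hc : 4 * (1 - q) * (1 - q ^ ν) > q ^ ν) :
    ∑' n : ℕ, ((n : ℝ) + 2) * |K q ν (n + 1)| ≤
      (8 * (1 - q) * (1 - q ^ ν) * q ^ ν - q ^ (2 * ν)) / (4 * (1 - q) * (1 - q ^ ν) - q ^ ν) ^ 2 :=
  stmt13_general q ν hq hc
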